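/- In the graph G of the resolving-set construction, if T is a minimal transversal of 𝓗, then Z ∪ T is a minimal resolving set of G for any Z ∈ 𝓩. -/
import Mathlib


namespace ResConstr

/-! ## The resolving-set construction

Given a Sperner hypergraph `ℋ` with vertex set `{v_1, …, v_n}` (encoded as `Fin n`) and
edge set `E_1, …, E_m` (encoded as `E : Fin m → Set (Fin n)`), where `n = 2^p > 2` and
`m = 2^q > 2`, we build the graph `G` of the reduction from Trans-Enum to MinResolving.
Vertex `v_i` of the paper is `Vert.v ⟨i-1⟩`, edge vertex `e_j` is `Vert.e ⟨j-1⟩`, etc.;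
`U = {u_1, u'_1, …, u_{log n + 1}, u'_{log n + 1}}` is encoded by `Vert.u, Vert.u'` over
`Fin (p+1)` and `W` similarly by `Vert.w, Vert.w'` over `Fin (q+1)`. -/

inductive Vert (n m p q : ℕ) : Type
  | v : Fin n → Vert n m p q
  | e : Fin m → Vert n m p q
  | e' : Fin m → Vert n m p q
  | u : Fin (p + 1) → Vert n m p q
  | u' : Fin (p + 1) → Vert n m p q
  | w : Fin (q + 1) → Vert n m p q
  | w' : Fin (q + 1) → Vert n m p q

variable {n m p q : ℕ}

/-- The base (one-sided) adjacency relation of the construction; the graph is obtained by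
symmetrizing it.  `Nat.testBit (i+1) k = true` encodes `k+1 ∈ I(i+1)`, i.e. the `(k+1)`-th
bit (starting from 1) of the binary representation of the paper-index `i+1` equals 1. -/
def baseRel (E : Fin m → Set (Fin n)) : Vert n m p q → Vert n m p q → Prop
  | .v _, .v _ => True                                       -- V is a clique
  | .e _, .e _ => True                                       -- H is a clique
  | .e' _, .e' _ => True                                     -- H' is a clique
  | .v i, .e j => i ∉ E j                                    -- non-incidence between V and H
  | .v _, .e' _ => True                                      -- V is complete to H'
  | .v i, .u k => Nat.testBit (i.val + 1) k.val = true       -- binary coding between V and U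
  | .v i, .u' k => Nat.testBit (i.val + 1) k.val = true
  | .v _, .w _ => True                                       -- W is complete to V
  | .v _, .w' _ => True
  | .e j, .w k => Nat.testBit (j.val + 1) k.val = true       -- binary coding between H ∪ H' and W
  | .e j, .w' k => Nat.testBit (j.val + 1) k.val = true
  | .e' j, .w k => Nat.testBit (j.val + 1) k.val = true
  | .e' j, .w' k => Nat.testBit (j.val + 1) k.val = true
  | .u _, .u _ => True                                       -- U is a clique minus the edges u_i u'_i
  | .u k, .u' k' => k ≠ k'
  | .u' _, .u' _ => True
  | .u _, .e _ => True                                       -- U is complete to H ∪ H'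
  | .u _, .e' _ => True
  | .u' _, .e _ => True
  | .u' _, .e' _ => True
  | .w k, .w' k' => k = k'                                   -- the only edges inside W are w_j w'_j
  | _, _ => False

/-- The graph `G` of the resolving-set construction. -/
def G (E : Fin m → Set (Fin n)) : SimpleGraph (Vert n m p q) :=
  SimpleGraph.fromRel (baseRel E)

/-- `S` is a resolving set of `G`. -/
def IsResolvingSet {α : Type*} (G : SimpleGraph α) (S : Set α) : Prop :=
  ∀ a b : α, a ≠ b → ∃ z ∈ S, G.dist a z ≠ G.dist b z

/-- `S` is an inclusion-wise minimal resolving set of `G`. -/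
def IsMinimalResolvingSet {α : Type*} (G : SimpleGraph α) (S : Set α) : Prop :=
  IsResolvingSet G S ∧ ∀ S' : Set α, S' ⊂ S → ¬ IsResolvingSet G S'

/-- `T` is a transversal of the hypergraph with edges `E j`. -/
def IsTransversal (E : Fin m → Set (Fin n)) (T : Set (Fin n)) : Prop :=
  ∀ j : Fin m, (T ∩ E j).Nonempty

/-- `T` is an inclusion-wise minimal transversal of the hypergraph with edges `E j`. -/
def IsMinimalTransversal (E : Fin m → Set (Fin n)) (T : Set (Fin n)) : Prop :=
  IsTransversal E T ∧ ∀ T' : Set (Fin n), T' ⊂ T → ¬ IsTransversal E T'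

/-- The family `𝒵` of all sets `Z = X ∪ Y` where `X` picks exactly one vertex from each pair
`{u_k, u'_k}` and `Y` picks exactly one vertex from each pair `{w_k, w'_k}`. -/
def ZFam : Set (Set (Vert n m p q)) :=
  {Z | ∃ (x : Fin (p + 1) → Bool) (y : Fin (q + 1) → Bool),
    Z = (Set.range fun k => if x k then (Vert.u k : Vert n m p q) else Vert.u' k) ∪
        (Set.range fun k => if y k then (Vert.w k : Vert n m p q) else Vert.w' k)}

-- ====================== auxiliary lemmas ======================

section DistHelpers

variable {α : Type*} {G : SimpleGraph α} {a b c z : α}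

lemma dist_ne_of_adj' (h1 : G.Adj a z) (h2 : ¬ G.Adj b z) : G.dist a z ≠ G.dist b z := by
  rw [SimpleGraph.dist_eq_one_iff_adj.mpr h1]
  intro h
  exact h2 (SimpleGraph.dist_eq_one_iff_adj.mp h.symm)

lemma dist_eq_two' (h0 : a ≠ z) (h1 : ¬ G.Adj a z) (h2 : G.Adj a c) (h3 : G.Adj c z) :
    G.dist a z = 2 := by
  have hr : G.Reachable a z := h2.reachable.trans h3.reachable
  have hle : G.dist a z ≤ 2 := by
    have := SimpleGraph.dist_le ((h2.toWalk).append h3.toWalk)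
    simpa using this
  have hz0 : G.dist a z ≠ 0 := (hr.pos_dist_of_ne h0).ne'
  have hz1 : G.dist a z ≠ 1 := fun h => h1 (SimpleGraph.dist_eq_one_iff_adj.mp h)
  omega

end DistHelpers

section BitHelpers

lemma exists_bit_true {N x : ℕ} (h1 : 1 ≤ x) (h2 : x ≤ 2 ^ N) :
    ∃ k : Fin (N + 1), x.testBit k.val = true := by
  by_contra hc
  push_neg at hc
  have hx0 : x = 0 := by
    apply Nat.eq_of_testBit_eq
    intro i
    rw [Nat.zero_testBit]
    by_cases hi : i < N + 1
    · simpa using hc ⟨i, hi⟩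
    · exact Nat.testBit_lt_two_pow
        (lt_of_le_of_lt h2 (Nat.pow_lt_pow_right one_lt_two (by omega)))
  omega

lemma exists_bit_false {N x : ℕ} (hN : 1 ≤ N) (h2 : x ≤ 2 ^ N) :
    ∃ k : Fin (N + 1), x.testBit k.val = false := by
  by_contra hc
  push_neg at hc
  simp only [Bool.not_eq_false] at hc
  have hx : x = 2 ^ (N + 1) - 1 := by
    apply Nat.eq_of_testBit_eq
    intro i
    rw [Nat.testBit_two_pow_sub_one]
    by_cases hi : i < N + 1
    · simpa [hi] using hc ⟨i, hi⟩
    · simp only [decide_eq_false hi]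
      exact Nat.testBit_lt_two_pow
        (lt_of_le_of_lt h2 (Nat.pow_lt_pow_right one_lt_two (by omega)))
  have h2N : 2 ^ N < 2 ^ (N + 1) - 1 := by
    have : 2 ≤ 2 ^ N := by
      calc 2 = 2 ^ 1 := by norm_num
      _ ≤ 2 ^ N := Nat.pow_le_pow_right (by norm_num) hN
    have : 2 ^ (N + 1) = 2 * 2 ^ N := by rw [pow_succ]; ring
    omega
  omega

lemma bits_differ {N x y : ℕ} (hx : x < 2 ^ (N + 1)) (hy : y < 2 ^ (N + 1)) (hne : x ≠ y) :
    ∃ k : Fin (N + 1), x.testBit k.val ≠ y.testBit k.val := by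
  by_contra hc
  push_neg at hc
  refine hne (Nat.eq_of_testBit_eq fun i => ?_)
  by_cases hi : i < N + 1
  · exact hc ⟨i, hi⟩
  · rw [Nat.testBit_lt_two_pow, Nat.testBit_lt_two_pow]
    · exact lt_of_lt_of_le hy (Nat.pow_le_pow_right (by norm_num) (by omega))
    · exact lt_of_lt_of_le hx (Nat.pow_le_pow_right (by norm_num) (by omega))

lemma bool_cases_ne {a b : Bool} (h : a ≠ b) :
    (a = true ∧ b = false) ∨ (a = false ∧ b = true) := by
  cases a <;> cases b <;> simp_all

end BitHelpers
section AdjHelpers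

variable {E : Fin m → Set (Fin n)}

lemma adj_iff {a b : Vert n m p q} :
    (G E).Adj a b ↔ a ≠ b ∧ (baseRel E a b ∨ baseRel E b a) :=
  SimpleGraph.fromRel_adj _ _ _

lemma nadj_symm {a b : Vert n m p q} (h : ¬ (G E).Adj a b) : ¬ (G E).Adj b a :=
  fun h' => h h'.symm

-- positive adjacency facts
lemma av_v {i i' : Fin n} (h : i ≠ i') :
    (G E).Adj (Vert.v (p := p) (q := q) i) (Vert.v i') :=
  adj_iff.mpr ⟨by simp [h], Or.inl trivial⟩

lemma av_e {i : Fin n} {j : Fin m} (h : i ∉ E j) :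
    (G E).Adj (Vert.v (p := p) (q := q) i) (Vert.e j) :=
  adj_iff.mpr ⟨by simp, Or.inl h⟩

lemma av_e' (i : Fin n) (j : Fin m) :
    (G E).Adj (Vert.v (p := p) (q := q) i) (Vert.e' j) :=
  adj_iff.mpr ⟨by simp, Or.inl trivial⟩

lemma av_u {i : Fin n} {k : Fin (p + 1)} (h : Nat.testBit (i.val + 1) k.val = true) :
    (G E).Adj (Vert.v (m := m) (q := q) i) (Vert.u k) :=
  adj_iff.mpr ⟨by simp, Or.inl h⟩

lemma av_u' {i : Fin n} {k : Fin (p + 1)} (h : Nat.testBit (i.val + 1) k.val = true) :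
    (G E).Adj (Vert.v (m := m) (q := q) i) (Vert.u' k) :=
  adj_iff.mpr ⟨by simp, Or.inl h⟩

lemma av_w (i : Fin n) (l : Fin (q + 1)) :
    (G E).Adj (Vert.v (m := m) (p := p) i) (Vert.w l) :=
  adj_iff.mpr ⟨by simp, Or.inl trivial⟩

lemma av_w' (i : Fin n) (l : Fin (q + 1)) :
    (G E).Adj (Vert.v (m := m) (p := p) i) (Vert.w' l) :=
  adj_iff.mpr ⟨by simp, Or.inl trivial⟩

lemma ae_w {j : Fin m} {l : Fin (q + 1)} (h : Nat.testBit (j.val + 1) l.val = true) :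
    (G E).Adj (Vert.e (n := n) (p := p) j) (Vert.w l) :=
  adj_iff.mpr ⟨by simp, Or.inl h⟩

lemma ae_w' {j : Fin m} {l : Fin (q + 1)} (h : Nat.testBit (j.val + 1) l.val = true) :
    (G E).Adj (Vert.e (n := n) (p := p) j) (Vert.w' l) :=
  adj_iff.mpr ⟨by simp, Or.inl h⟩

lemma ae'_w {j : Fin m} {l : Fin (q + 1)} (h : Nat.testBit (j.val + 1) l.val = true) :
    (G E).Adj (Vert.e' (n := n) (p := p) j) (Vert.w l) :=
  adj_iff.mpr ⟨by simp, Or.inl h⟩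

lemma ae'_w' {j : Fin m} {l : Fin (q + 1)} (h : Nat.testBit (j.val + 1) l.val = true) :
    (G E).Adj (Vert.e' (n := n) (p := p) j) (Vert.w' l) :=
  adj_iff.mpr ⟨by simp, Or.inl h⟩

lemma au_u {k k' : Fin (p + 1)} (h : k ≠ k') :
    (G E).Adj (Vert.u (n := n) (m := m) (q := q) k) (Vert.u k') :=
  adj_iff.mpr ⟨by simp [h], Or.inl trivial⟩

lemma au_u' {k k' : Fin (p + 1)} (h : k ≠ k') :
    (G E).Adj (Vert.u (n := n) (m := m) (q := q) k) (Vert.u' k') :=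
  adj_iff.mpr ⟨by simp, Or.inl h⟩

lemma au'_u' {k k' : Fin (p + 1)} (h : k ≠ k') :
    (G E).Adj (Vert.u' (n := n) (m := m) (q := q) k) (Vert.u' k') :=
  adj_iff.mpr ⟨by simp [h], Or.inl trivial⟩

lemma au_e (k : Fin (p + 1)) (j : Fin m) :
    (G E).Adj (Vert.u (n := n) (q := q) k) (Vert.e j) :=
  adj_iff.mpr ⟨by simp, Or.inl trivial⟩

lemma au_e' (k : Fin (p + 1)) (j : Fin m) :
    (G E).Adj (Vert.u (n := n) (q := q) k) (Vert.e' j) :=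
  adj_iff.mpr ⟨by simp, Or.inl trivial⟩

lemma au'_e (k : Fin (p + 1)) (j : Fin m) :
    (G E).Adj (Vert.u' (n := n) (q := q) k) (Vert.e j) :=
  adj_iff.mpr ⟨by simp, Or.inl trivial⟩

lemma au'_e' (k : Fin (p + 1)) (j : Fin m) :
    (G E).Adj (Vert.u' (n := n) (q := q) k) (Vert.e' j) :=
  adj_iff.mpr ⟨by simp, Or.inl trivial⟩

lemma aw_w' (l : Fin (q + 1)) :
    (G E).Adj (Vert.w (n := n) (m := m) (p := p) l) (Vert.w' l) :=
  adj_iff.mpr ⟨by simp, Or.inl rfl⟩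

-- negative adjacency facts
lemma nv_e {i : Fin n} {j : Fin m} (h : i ∈ E j) :
    ¬ (G E).Adj (Vert.v (p := p) (q := q) i) (Vert.e j) := by
  rw [adj_iff]; rintro ⟨-, h' | h'⟩
  · exact h' h
  · exact h'

lemma nv_u {i : Fin n} {k : Fin (p + 1)} (h : Nat.testBit (i.val + 1) k.val = false) :
    ¬ (G E).Adj (Vert.v (m := m) (q := q) i) (Vert.u k) := by
  rw [adj_iff]; rintro ⟨-, h' | h'⟩
  · exact Bool.false_ne_true (h.symm.trans h')
  · exact h'

lemma nv_u' {i : Fin n} {k : Fin (p + 1)} (h : Nat.testBit (i.val + 1) k.val = false) :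
    ¬ (G E).Adj (Vert.v (m := m) (q := q) i) (Vert.u' k) := by
  rw [adj_iff]; rintro ⟨-, h' | h'⟩
  · exact Bool.false_ne_true (h.symm.trans h')
  · exact h'

lemma ne_w {j : Fin m} {l : Fin (q + 1)} (h : Nat.testBit (j.val + 1) l.val = false) :
    ¬ (G E).Adj (Vert.e (n := n) (p := p) j) (Vert.w l) := by
  rw [adj_iff]; rintro ⟨-, h' | h'⟩
  · exact Bool.false_ne_true (h.symm.trans h')
  · exact h'

lemma ne_w' {j : Fin m} {l : Fin (q + 1)} (h : Nat.testBit (j.val + 1) l.val = false) :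
    ¬ (G E).Adj (Vert.e (n := n) (p := p) j) (Vert.w' l) := by
  rw [adj_iff]; rintro ⟨-, h' | h'⟩
  · exact Bool.false_ne_true (h.symm.trans h')
  · exact h'

lemma ne'_w {j : Fin m} {l : Fin (q + 1)} (h : Nat.testBit (j.val + 1) l.val = false) :
    ¬ (G E).Adj (Vert.e' (n := n) (p := p) j) (Vert.w l) := by
  rw [adj_iff]; rintro ⟨-, h' | h'⟩
  · exact Bool.false_ne_true (h.symm.trans h')
  · exact h'

lemma ne'_w' {j : Fin m} {l : Fin (q + 1)} (h : Nat.testBit (j.val + 1) l.val = false) :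
    ¬ (G E).Adj (Vert.e' (n := n) (p := p) j) (Vert.w' l) := by
  rw [adj_iff]; rintro ⟨-, h' | h'⟩
  · exact Bool.false_ne_true (h.symm.trans h')
  · exact h'

lemma nu_u' (k : Fin (p + 1)) :
    ¬ (G E).Adj (Vert.u (n := n) (m := m) (q := q) k) (Vert.u' k) := by
  rw [adj_iff]; rintro ⟨-, h' | h'⟩
  · exact h' rfl
  · exact h'

lemma nu_w (k : Fin (p + 1)) (l : Fin (q + 1)) :
    ¬ (G E).Adj (Vert.u (n := n) (m := m) k) (Vert.w l) := by
  rw [adj_iff]; rintro ⟨-, h' | h'⟩ <;> exact h'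

lemma nu_w' (k : Fin (p + 1)) (l : Fin (q + 1)) :
    ¬ (G E).Adj (Vert.u (n := n) (m := m) k) (Vert.w' l) := by
  rw [adj_iff]; rintro ⟨-, h' | h'⟩ <;> exact h'

lemma nu'_w (k : Fin (p + 1)) (l : Fin (q + 1)) :
    ¬ (G E).Adj (Vert.u' (n := n) (m := m) k) (Vert.w l) := by
  rw [adj_iff]; rintro ⟨-, h' | h'⟩ <;> exact h'

lemma nu'_w' (k : Fin (p + 1)) (l : Fin (q + 1)) :
    ¬ (G E).Adj (Vert.u' (n := n) (m := m) k) (Vert.w' l) := by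
  rw [adj_iff]; rintro ⟨-, h' | h'⟩ <;> exact h'

lemma nw_w (l l' : Fin (q + 1)) :
    ¬ (G E).Adj (Vert.w (n := n) (m := m) (p := p) l) (Vert.w l') := by
  rw [adj_iff]; rintro ⟨-, h' | h'⟩ <;> exact h'

lemma nw'_w' (l l' : Fin (q + 1)) :
    ¬ (G E).Adj (Vert.w' (n := n) (m := m) (p := p) l) (Vert.w' l') := by
  rw [adj_iff]; rintro ⟨-, h' | h'⟩ <;> exact h'

lemma nw_w' {l l' : Fin (q + 1)} (h : l ≠ l') :
    ¬ (G E).Adj (Vert.w (n := n) (m := m) (p := p) l) (Vert.w' l') := by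
  rw [adj_iff]; rintro ⟨-, h' | h'⟩
  · exact h h'
  · exact h'

end AdjHelpers
section MidHelpers

variable {E : Fin m → Set (Fin n)} {z : Vert n m p q}

-- lemmas about z ∈ {u k, u' k}
lemma L_v_zu_t {k : Fin (p + 1)} (hz : z = Vert.u k ∨ z = Vert.u' k)
    {i : Fin n} (h : Nat.testBit (i.val + 1) k.val = true) :
    (G E).Adj (Vert.v i) z := by
  rcases hz with rfl | rfl
  · exact av_u h
  · exact av_u' h

lemma L_v_zu_f {k : Fin (p + 1)} (hz : z = Vert.u k ∨ z = Vert.u' k)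
    {i : Fin n} (h : Nat.testBit (i.val + 1) k.val = false) :
    ¬ (G E).Adj (Vert.v i) z := by
  rcases hz with rfl | rfl
  · exact nv_u h
  · exact nv_u' h

lemma L_e_zu {k : Fin (p + 1)} (hz : z = Vert.u k ∨ z = Vert.u' k) (j : Fin m) :
    (G E).Adj (Vert.e j) z := by
  rcases hz with rfl | rfl
  · exact (au_e k j).symm
  · exact (au'_e k j).symm

lemma L_e'_zu {k : Fin (p + 1)} (hz : z = Vert.u k ∨ z = Vert.u' k) (j : Fin m) :
    (G E).Adj (Vert.e' j) z := by
  rcases hz with rfl | rfl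
  · exact (au_e' k j).symm
  · exact (au'_e' k j).symm

lemma L_u_zu {k : Fin (p + 1)} (hz : z = Vert.u k ∨ z = Vert.u' k)
    {k' : Fin (p + 1)} (h : k' ≠ k) :
    (G E).Adj (Vert.u k') z := by
  rcases hz with rfl | rfl
  · exact au_u h
  · exact au_u' h

lemma L_u'_zu {k : Fin (p + 1)} (hz : z = Vert.u k ∨ z = Vert.u' k)
    {k' : Fin (p + 1)} (h : k' ≠ k) :
    (G E).Adj (Vert.u' k') z := by
  rcases hz with rfl | rfl
  · exact (au_u' h.symm).symm
  · exact au'_u' h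

lemma L_w_zu {k : Fin (p + 1)} (hz : z = Vert.u k ∨ z = Vert.u' k) (l : Fin (q + 1)) :
    ¬ (G E).Adj (Vert.w l) z := by
  rcases hz with rfl | rfl
  · exact nadj_symm (nu_w k l)
  · exact nadj_symm (nu'_w k l)

lemma L_w'_zu {k : Fin (p + 1)} (hz : z = Vert.u k ∨ z = Vert.u' k) (l : Fin (q + 1)) :
    ¬ (G E).Adj (Vert.w' l) z := by
  rcases hz with rfl | rfl
  · exact nadj_symm (nu_w' k l)
  · exact nadj_symm (nu'_w' k l)

-- lemmas about z ∈ {w k, w' k}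
lemma L_v_zw {k : Fin (q + 1)} (hz : z = Vert.w k ∨ z = Vert.w' k) (i : Fin n) :
    (G E).Adj (Vert.v i) z := by
  rcases hz with rfl | rfl
  · exact av_w i k
  · exact av_w' i k

lemma L_e_zw_t {k : Fin (q + 1)} (hz : z = Vert.w k ∨ z = Vert.w' k)
    {j : Fin m} (h : Nat.testBit (j.val + 1) k.val = true) :
    (G E).Adj (Vert.e j) z := by
  rcases hz with rfl | rfl
  · exact ae_w h
  · exact ae_w' h

lemma L_e_zw_f {k : Fin (q + 1)} (hz : z = Vert.w k ∨ z = Vert.w' k)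
    {j : Fin m} (h : Nat.testBit (j.val + 1) k.val = false) :
    ¬ (G E).Adj (Vert.e j) z := by
  rcases hz with rfl | rfl
  · exact ne_w h
  · exact ne_w' h

lemma L_e'_zw_t {k : Fin (q + 1)} (hz : z = Vert.w k ∨ z = Vert.w' k)
    {j : Fin m} (h : Nat.testBit (j.val + 1) k.val = true) :
    (G E).Adj (Vert.e' j) z := by
  rcases hz with rfl | rfl
  · exact ae'_w h
  · exact ae'_w' h

lemma L_e'_zw_f {k : Fin (q + 1)} (hz : z = Vert.w k ∨ z = Vert.w' k)
    {j : Fin m} (h : Nat.testBit (j.val + 1) k.val = false) :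
    ¬ (G E).Adj (Vert.e' j) z := by
  rcases hz with rfl | rfl
  · exact ne'_w h
  · exact ne'_w' h

lemma L_u_zw {k : Fin (q + 1)} (hz : z = Vert.w k ∨ z = Vert.w' k) (l : Fin (p + 1)) :
    ¬ (G E).Adj (Vert.u l) z := by
  rcases hz with rfl | rfl
  · exact nu_w l k
  · exact nu_w' l k

lemma L_u'_zw {k : Fin (q + 1)} (hz : z = Vert.w k ∨ z = Vert.w' k) (l : Fin (p + 1)) :
    ¬ (G E).Adj (Vert.u' l) z := by
  rcases hz with rfl | rfl
  · exact nu'_w l k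
  · exact nu'_w' l k

lemma L_w_zw {k : Fin (q + 1)} (hz : z = Vert.w k ∨ z = Vert.w' k)
    {l : Fin (q + 1)} (h : l ≠ k) :
    ¬ (G E).Adj (Vert.w l) z := by
  rcases hz with rfl | rfl
  · exact nw_w l k
  · exact nw_w' h

lemma L_w'_zw {k : Fin (q + 1)} (hz : z = Vert.w k ∨ z = Vert.w' k)
    {l : Fin (q + 1)} (h : l ≠ k) :
    ¬ (G E).Adj (Vert.w' l) z := by
  rcases hz with rfl | rfl
  · exact nadj_symm (nw_w' h.symm)
  · exact nw'_w' l k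

-- generic vertex-distinctness from z
lemma ne_zu_of_v {k : Fin (p + 1)} (hz : z = Vert.u k ∨ z = Vert.u' k) (i : Fin n) :
    Vert.v (p := p) (q := q) i ≠ z := by rcases hz with rfl | rfl <;> simp

lemma ne_zu_of_w {k : Fin (p + 1)} (hz : z = Vert.u k ∨ z = Vert.u' k) (l : Fin (q + 1)) :
    Vert.w (n := n) (m := m) l ≠ z := by rcases hz with rfl | rfl <;> simp

lemma ne_zu_of_w' {k : Fin (p + 1)} (hz : z = Vert.u k ∨ z = Vert.u' k) (l : Fin (q + 1)) :
    Vert.w' (n := n) (m := m) l ≠ z := by rcases hz with rfl | rfl <;> simp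

lemma ne_zw_of_u {k : Fin (q + 1)} (hz : z = Vert.w k ∨ z = Vert.w' k) (l : Fin (p + 1)) :
    Vert.u (n := n) (m := m) l ≠ z := by rcases hz with rfl | rfl <;> simp

lemma ne_zw_of_u' {k : Fin (q + 1)} (hz : z = Vert.w k ∨ z = Vert.w' k) (l : Fin (p + 1)) :
    Vert.u' (n := n) (m := m) l ≠ z := by rcases hz with rfl | rfl <;> simp

lemma ne_zw_of_e {k : Fin (q + 1)} (hz : z = Vert.w k ∨ z = Vert.w' k) (j : Fin m) :
    Vert.e (n := n) (p := p) j ≠ z := by rcases hz with rfl | rfl <;> simp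

lemma ne_zw_of_e' {k : Fin (q + 1)} (hz : z = Vert.w k ∨ z = Vert.w' k) (j : Fin m) :
    Vert.e' (n := n) (p := p) j ≠ z := by rcases hz with rfl | rfl <;> simp

lemma ne_zw_of_w {k : Fin (q + 1)} (hz : z = Vert.w k ∨ z = Vert.w' k)
    {l : Fin (q + 1)} (h : l ≠ k) :
    Vert.w (n := n) (m := m) l ≠ z := by rcases hz with rfl | rfl <;> simp [h]

lemma ne_zw_of_w' {k : Fin (q + 1)} (hz : z = Vert.w k ∨ z = Vert.w' k)
    {l : Fin (q + 1)} (h : l ≠ k) :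
    Vert.w' (n := n) (m := m) l ≠ z := by rcases hz with rfl | rfl <;> simp [h]

end MidHelpers

/-- In the graph `G` of the resolving-set construction, if `T` is a minimal transversal of
`ℋ`, then `Z ∪ T` is a minimal resolving set of `G` for every `Z ∈ 𝒵`. -/
theorem transversal_gives_minimal_resolving
    (E : Fin m → Set (Fin n))
    (hn : n = 2 ^ p) (hm : m = 2 ^ q) (hn2 : 2 < n) (hm2 : 2 < m)
    (hSperner : ∀ j j' : Fin m, E j ⊆ E j' → j = j')
    (hfull : ∀ j : Fin m, E j ≠ Set.univ)
    (T : Set (Fin n)) (hT : IsMinimalTransversal E T)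
    (Z : Set (Vert n m p q)) (hZ : Z ∈ ZFam) :
    IsMinimalResolvingSet (G E) (Z ∪ (Vert.v : Fin n → Vert n m p q) '' T) := by
  obtain ⟨x, y, rfl⟩ := hZ
  have hp1 : 1 ≤ p := by
    rcases Nat.eq_zero_or_pos p with h | h
    · subst h; simp at hn; omega
    · exact h
  have hq1 : 1 ≤ q := by
    rcases Nat.eq_zero_or_pos q with h | h
    · subst h; simp at hm; omega
    · exact h
  have hn0 : 0 < n := by omega
  have hm0 : 0 < m := by omega
  set S : Set (Vert n m p q) :=
    (Set.range fun k => if x k then (Vert.u k : Vert n m p q) else Vert.u' k) ∪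
      (Set.range fun k => if y k then (Vert.w k : Vert n m p q) else Vert.w' k) ∪
      (Vert.v : Fin n → Vert n m p q) '' T with hS
  have zuW : ∀ k : Fin (p + 1), ∃ z ∈ S, z = Vert.u k ∨ z = Vert.u' k := fun k => by
    refine ⟨if x k then Vert.u k else Vert.u' k, ?_, by by_cases h : x k <;> simp [h]⟩
    rw [hS]; exact Or.inl (Or.inl ⟨k, rfl⟩)
  have zwW : ∀ k : Fin (q + 1), ∃ z ∈ S, z = Vert.w k ∨ z = Vert.w' k := fun k => by
    refine ⟨if y k then Vert.w k else Vert.w' k, ?_, by by_cases h : y k <;> simp [h]⟩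
    rw [hS]; exact Or.inl (Or.inr ⟨k, rfl⟩)
  have hvS : ∀ t ∈ T, Vert.v (p := p) (q := q) t ∈ S := fun t ht => by
    rw [hS]; exact Or.inr ⟨t, ht, rfl⟩
  have hbnd : ∀ i : Fin n, i.val + 1 ≤ 2 ^ p := fun i => by have := i.isLt; omega
  have hbndq : ∀ j : Fin m, j.val + 1 ≤ 2 ^ q := fun j => by have := j.isLt; omega
  have hpowp : (2 : ℕ) ^ p < 2 ^ (p + 1) := Nat.pow_lt_pow_right one_lt_two (by omega)
  have hpowq : (2 : ℕ) ^ q < 2 ^ (q + 1) := Nat.pow_lt_pow_right one_lt_two (by omega)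
  have d1 : ∀ {a b : Vert n m p q}, (G E).Adj a b → (G E).dist a b = 1 :=
    fun h => SimpleGraph.dist_eq_one_iff_adj.mpr h
  have kex : ∀ k : Fin (p + 1), ∃ k2 : Fin (p + 1), k2 ≠ k := fun k => by
    rcases Nat.eq_zero_or_pos k.val with h | h
    · exact ⟨⟨1, by omega⟩, by rw [Fin.ne_iff_vne]; simp; omega⟩
    · exact ⟨⟨0, by omega⟩, by rw [Fin.ne_iff_vne]; simp; omega⟩
  -- pick an index in Fin m with a prescribed true bit
  have hj0 : ∀ k' : Fin (q + 1), ∃ j0 : Fin m, Nat.testBit (j0.val + 1) k'.val = true := by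
    intro k'
    have h1 : 2 ^ k'.val ≤ 2 ^ q := Nat.pow_le_pow_right (by norm_num) (by have := k'.isLt; omega)
    have h2 : 1 ≤ 2 ^ k'.val := Nat.one_le_two_pow
    refine ⟨⟨2 ^ k'.val - 1, by omega⟩, ?_⟩
    show Nat.testBit (2 ^ k'.val - 1 + 1) k'.val = true
    rw [Nat.sub_add_cancel h2]
    exact Nat.testBit_two_pow_self
  have hi0 : ∀ k' : Fin (p + 1), ∃ i0 : Fin n, Nat.testBit (i0.val + 1) k'.val = true := by
    intro k'
    have h1 : 2 ^ k'.val ≤ 2 ^ p := Nat.pow_le_pow_right (by norm_num) (by have := k'.isLt; omega)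
    have h2 : 1 ≤ 2 ^ k'.val := Nat.one_le_two_pow
    refine ⟨⟨2 ^ k'.val - 1, by omega⟩, ?_⟩
    show Nat.testBit (2 ^ k'.val - 1 + 1) k'.val = true
    rw [Nat.sub_add_cancel h2]
    exact Nat.testBit_two_pow_self
  have key : IsResolvingSet (G E) S := by
    have sym : ∀ a b : Vert n m p q,
        (∃ z ∈ S, (G E).dist a z ≠ (G E).dist b z) →
        (∃ z ∈ S, (G E).dist b z ≠ (G E).dist a z) := by
      rintro a b ⟨z, h1, h2⟩; exact ⟨z, h1, h2.symm⟩
    have Hvv : ∀ i i' : Fin n, i ≠ i' →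
        ∃ z ∈ S, (G E).dist (Vert.v i) z ≠ (G E).dist (Vert.v i') z := by
      intro i i' hii
      obtain ⟨k, hk⟩ := bits_differ (N := p) (x := i.val + 1) (y := i'.val + 1)
        (by have := hbnd i; omega) (by have := hbnd i'; omega)
        (fun hh => hii (Fin.ext (by omega)))
      obtain ⟨z, hzS, hz⟩ := zuW k
      rcases bool_cases_ne hk with ⟨h1, h2⟩ | ⟨h1, h2⟩
      · exact ⟨z, hzS, dist_ne_of_adj' (L_v_zu_t hz h1) (L_v_zu_f hz h2)⟩
      · exact ⟨z, hzS, (dist_ne_of_adj' (L_v_zu_t hz h2) (L_v_zu_f hz h1)).symm⟩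
    have Hve : ∀ (i : Fin n) (j : Fin m),
        ∃ z ∈ S, (G E).dist (Vert.v i) z ≠ (G E).dist (Vert.e j) z := by
      intro i j
      obtain ⟨k, hk⟩ := exists_bit_false hq1 (hbndq j)
      obtain ⟨z, hzS, hz⟩ := zwW k
      exact ⟨z, hzS, dist_ne_of_adj' (L_v_zw hz i) (L_e_zw_f hz hk)⟩
    have Hve' : ∀ (i : Fin n) (j : Fin m),
        ∃ z ∈ S, (G E).dist (Vert.v i) z ≠ (G E).dist (Vert.e' j) z := by
      intro i j
      obtain ⟨k, hk⟩ := exists_bit_false hq1 (hbndq j)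
      obtain ⟨z, hzS, hz⟩ := zwW k
      exact ⟨z, hzS, dist_ne_of_adj' (L_v_zw hz i) (L_e'_zw_f hz hk)⟩
    have Hvu : ∀ (i : Fin n) (k : Fin (p + 1)),
        ∃ z ∈ S, (G E).dist (Vert.v i) z ≠ (G E).dist (Vert.u k) z := by
      intro i k
      obtain ⟨z, hzS, hz⟩ := zwW ⟨0, by omega⟩
      exact ⟨z, hzS, dist_ne_of_adj' (L_v_zw hz i) (L_u_zw hz k)⟩
    have Hvu' : ∀ (i : Fin n) (k : Fin (p + 1)),
        ∃ z ∈ S, (G E).dist (Vert.v i) z ≠ (G E).dist (Vert.u' k) z := by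
      intro i k
      obtain ⟨z, hzS, hz⟩ := zwW ⟨0, by omega⟩
      exact ⟨z, hzS, dist_ne_of_adj' (L_v_zw hz i) (L_u'_zw hz k)⟩
    have Hvw : ∀ (i : Fin n) (l : Fin (q + 1)),
        ∃ z ∈ S, (G E).dist (Vert.v i) z ≠ (G E).dist (Vert.w l) z := by
      intro i l
      obtain ⟨k, hk⟩ := exists_bit_true (by omega) (hbnd i)
      obtain ⟨z, hzS, hz⟩ := zuW k
      exact ⟨z, hzS, dist_ne_of_adj' (L_v_zu_t hz hk) (L_w_zu hz l)⟩
    have Hvw' : ∀ (i : Fin n) (l : Fin (q + 1)),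
        ∃ z ∈ S, (G E).dist (Vert.v i) z ≠ (G E).dist (Vert.w' l) z := by
      intro i l
      obtain ⟨k, hk⟩ := exists_bit_true (by omega) (hbnd i)
      obtain ⟨z, hzS, hz⟩ := zuW k
      exact ⟨z, hzS, dist_ne_of_adj' (L_v_zu_t hz hk) (L_w'_zu hz l)⟩
    have Hee : ∀ j j' : Fin m, j ≠ j' →
        ∃ z ∈ S, (G E).dist (Vert.e j) z ≠ (G E).dist (Vert.e j') z := by
      intro j j' hjj
      obtain ⟨k, hk⟩ := bits_differ (N := q) (x := j.val + 1) (y := j'.val + 1)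
        (by have := hbndq j; omega) (by have := hbndq j'; omega)
        (fun hh => hjj (Fin.ext (by omega)))
      obtain ⟨z, hzS, hz⟩ := zwW k
      rcases bool_cases_ne hk with ⟨h1, h2⟩ | ⟨h1, h2⟩
      · exact ⟨z, hzS, dist_ne_of_adj' (L_e_zw_t hz h1) (L_e_zw_f hz h2)⟩
      · exact ⟨z, hzS, (dist_ne_of_adj' (L_e_zw_t hz h2) (L_e_zw_f hz h1)).symm⟩
    have He'e' : ∀ j j' : Fin m, j ≠ j' →
        ∃ z ∈ S, (G E).dist (Vert.e' j) z ≠ (G E).dist (Vert.e' j') z := by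
      intro j j' hjj
      obtain ⟨k, hk⟩ := bits_differ (N := q) (x := j.val + 1) (y := j'.val + 1)
        (by have := hbndq j; omega) (by have := hbndq j'; omega)
        (fun hh => hjj (Fin.ext (by omega)))
      obtain ⟨z, hzS, hz⟩ := zwW k
      rcases bool_cases_ne hk with ⟨h1, h2⟩ | ⟨h1, h2⟩
      · exact ⟨z, hzS, dist_ne_of_adj' (L_e'_zw_t hz h1) (L_e'_zw_f hz h2)⟩
      · exact ⟨z, hzS, (dist_ne_of_adj' (L_e'_zw_t hz h2) (L_e'_zw_f hz h1)).symm⟩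
    have Hee' : ∀ j j' : Fin m,
        ∃ z ∈ S, (G E).dist (Vert.e j) z ≠ (G E).dist (Vert.e' j') z := by
      intro j j'
      by_cases hjj : j = j'
      · subst hjj
        obtain ⟨t, htT, htE⟩ := hT.1 j
        exact ⟨Vert.v t, hvS t htT,
          (dist_ne_of_adj' ((av_e' t j).symm) (nadj_symm (nv_e htE))).symm⟩
      · obtain ⟨k, hk⟩ := bits_differ (N := q) (x := j.val + 1) (y := j'.val + 1)
          (by have := hbndq j; omega) (by have := hbndq j'; omega)
          (fun hh => hjj (Fin.ext (by omega)))
        obtain ⟨z, hzS, hz⟩ := zwW k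
        rcases bool_cases_ne hk with ⟨h1, h2⟩ | ⟨h1, h2⟩
        · exact ⟨z, hzS, dist_ne_of_adj' (L_e_zw_t hz h1) (L_e'_zw_f hz h2)⟩
        · exact ⟨z, hzS, (dist_ne_of_adj' (L_e'_zw_t hz h2) (L_e_zw_f hz h1)).symm⟩
    have Heu : ∀ (j : Fin m) (k : Fin (p + 1)),
        ∃ z ∈ S, (G E).dist (Vert.e j) z ≠ (G E).dist (Vert.u k) z := by
      intro j k
      obtain ⟨k', hk'⟩ := exists_bit_true (by omega) (hbndq j)
      obtain ⟨z, hzS, hz⟩ := zwW k'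
      exact ⟨z, hzS, dist_ne_of_adj' (L_e_zw_t hz hk') (L_u_zw hz k)⟩
    have Heu' : ∀ (j : Fin m) (k : Fin (p + 1)),
        ∃ z ∈ S, (G E).dist (Vert.e j) z ≠ (G E).dist (Vert.u' k) z := by
      intro j k
      obtain ⟨k', hk'⟩ := exists_bit_true (by omega) (hbndq j)
      obtain ⟨z, hzS, hz⟩ := zwW k'
      exact ⟨z, hzS, dist_ne_of_adj' (L_e_zw_t hz hk') (L_u'_zw hz k)⟩
    have He'u : ∀ (j : Fin m) (k : Fin (p + 1)),
        ∃ z ∈ S, (G E).dist (Vert.e' j) z ≠ (G E).dist (Vert.u k) z := by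
      intro j k
      obtain ⟨k', hk'⟩ := exists_bit_true (by omega) (hbndq j)
      obtain ⟨z, hzS, hz⟩ := zwW k'
      exact ⟨z, hzS, dist_ne_of_adj' (L_e'_zw_t hz hk') (L_u_zw hz k)⟩
    have He'u' : ∀ (j : Fin m) (k : Fin (p + 1)),
        ∃ z ∈ S, (G E).dist (Vert.e' j) z ≠ (G E).dist (Vert.u' k) z := by
      intro j k
      obtain ⟨k', hk'⟩ := exists_bit_true (by omega) (hbndq j)
      obtain ⟨z, hzS, hz⟩ := zwW k'
      exact ⟨z, hzS, dist_ne_of_adj' (L_e'_zw_t hz hk') (L_u'_zw hz k)⟩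
    have Hew : ∀ (j : Fin m) (l : Fin (q + 1)),
        ∃ z ∈ S, (G E).dist (Vert.e j) z ≠ (G E).dist (Vert.w l) z := by
      intro j l
      obtain ⟨z, hzS, hz⟩ := zuW ⟨0, by omega⟩
      exact ⟨z, hzS, dist_ne_of_adj' (L_e_zu hz j) (L_w_zu hz l)⟩
    have Hew' : ∀ (j : Fin m) (l : Fin (q + 1)),
        ∃ z ∈ S, (G E).dist (Vert.e j) z ≠ (G E).dist (Vert.w' l) z := by
      intro j l
      obtain ⟨z, hzS, hz⟩ := zuW ⟨0, by omega⟩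
      exact ⟨z, hzS, dist_ne_of_adj' (L_e_zu hz j) (L_w'_zu hz l)⟩
    have He'w : ∀ (j : Fin m) (l : Fin (q + 1)),
        ∃ z ∈ S, (G E).dist (Vert.e' j) z ≠ (G E).dist (Vert.w l) z := by
      intro j l
      obtain ⟨z, hzS, hz⟩ := zuW ⟨0, by omega⟩
      exact ⟨z, hzS, dist_ne_of_adj' (L_e'_zu hz j) (L_w_zu hz l)⟩
    have He'w' : ∀ (j : Fin m) (l : Fin (q + 1)),
        ∃ z ∈ S, (G E).dist (Vert.e' j) z ≠ (G E).dist (Vert.w' l) z := by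
      intro j l
      obtain ⟨z, hzS, hz⟩ := zuW ⟨0, by omega⟩
      exact ⟨z, hzS, dist_ne_of_adj' (L_e'_zu hz j) (L_w'_zu hz l)⟩
    have Huu : ∀ k k' : Fin (p + 1), k ≠ k' →
        ∃ z ∈ S, (G E).dist (Vert.u k) z ≠ (G E).dist (Vert.u k') z := by
      intro k k' h
      obtain ⟨z, hzS, hz⟩ := zuW k
      rcases hz with rfl | rfl
      · refine ⟨_, hzS, ?_⟩
        rw [SimpleGraph.dist_self, d1 (au_u (Ne.symm h))]
        omega
      · exact ⟨_, hzS, (dist_ne_of_adj' (au_u' (Ne.symm h)) (nu_u' k)).symm⟩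
    have Huu' : ∀ k k' : Fin (p + 1),
        ∃ z ∈ S, (G E).dist (Vert.u k) z ≠ (G E).dist (Vert.u' k') z := by
      intro k k'
      by_cases h : k = k'
      · subst h
        obtain ⟨k2, hk2⟩ := kex k
        obtain ⟨z, hzS, hz⟩ := zuW k
        rcases hz with rfl | rfl
        · refine ⟨_, hzS, ?_⟩
          rw [SimpleGraph.dist_self,
            dist_eq_two' (by simp) (nadj_symm (nu_u' k)) ((au_u' hk2).symm) (au_u hk2)]
          omega
        · refine ⟨_, hzS, ?_⟩
          rw [dist_eq_two' (by simp) (nu_u' k) (au_u (Ne.symm hk2)) (au_u' hk2),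
            SimpleGraph.dist_self]
          omega
      · obtain ⟨z, hzS, hz⟩ := zuW k
        rcases hz with rfl | rfl
        · refine ⟨_, hzS, ?_⟩
          rw [SimpleGraph.dist_self, d1 ((au_u' h).symm)]
          omega
        · exact ⟨_, hzS, (dist_ne_of_adj' (au'_u' (Ne.symm h)) (nu_u' k)).symm⟩
    have Hu'u' : ∀ k k' : Fin (p + 1), k ≠ k' →
        ∃ z ∈ S, (G E).dist (Vert.u' k) z ≠ (G E).dist (Vert.u' k') z := by
      intro k k' h
      obtain ⟨z, hzS, hz⟩ := zuW k
      rcases hz with rfl | rfl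
      · exact ⟨_, hzS, (dist_ne_of_adj' ((au_u' h).symm) (nadj_symm (nu_u' k))).symm⟩
      · refine ⟨_, hzS, ?_⟩
        rw [SimpleGraph.dist_self, d1 (au'_u' (Ne.symm h))]
        omega
    have Huw : ∀ (k : Fin (p + 1)) (l : Fin (q + 1)),
        ∃ z ∈ S, (G E).dist (Vert.u k) z ≠ (G E).dist (Vert.w l) z := by
      intro k l
      obtain ⟨k2, hk2⟩ := kex k
      obtain ⟨z, hzS, hz⟩ := zuW k2
      exact ⟨z, hzS, dist_ne_of_adj' (L_u_zu hz (Ne.symm hk2)) (L_w_zu hz l)⟩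
    have Huw' : ∀ (k : Fin (p + 1)) (l : Fin (q + 1)),
        ∃ z ∈ S, (G E).dist (Vert.u k) z ≠ (G E).dist (Vert.w' l) z := by
      intro k l
      obtain ⟨k2, hk2⟩ := kex k
      obtain ⟨z, hzS, hz⟩ := zuW k2
      exact ⟨z, hzS, dist_ne_of_adj' (L_u_zu hz (Ne.symm hk2)) (L_w'_zu hz l)⟩
    have Hu'w : ∀ (k : Fin (p + 1)) (l : Fin (q + 1)),
        ∃ z ∈ S, (G E).dist (Vert.u' k) z ≠ (G E).dist (Vert.w l) z := by
      intro k l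
      obtain ⟨k2, hk2⟩ := kex k
      obtain ⟨z, hzS, hz⟩ := zuW k2
      exact ⟨z, hzS, dist_ne_of_adj' (L_u'_zu hz (Ne.symm hk2)) (L_w_zu hz l)⟩
    have Hu'w' : ∀ (k : Fin (p + 1)) (l : Fin (q + 1)),
        ∃ z ∈ S, (G E).dist (Vert.u' k) z ≠ (G E).dist (Vert.w' l) z := by
      intro k l
      obtain ⟨k2, hk2⟩ := kex k
      obtain ⟨z, hzS, hz⟩ := zuW k2
      exact ⟨z, hzS, dist_ne_of_adj' (L_u'_zu hz (Ne.symm hk2)) (L_w'_zu hz l)⟩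
    have Hww : ∀ l l' : Fin (q + 1), l ≠ l' →
        ∃ z ∈ S, (G E).dist (Vert.w l) z ≠ (G E).dist (Vert.w l') z := by
      intro l l' h
      obtain ⟨z, hzS, hz⟩ := zwW l
      rcases hz with rfl | rfl
      · refine ⟨_, hzS, ?_⟩
        rw [SimpleGraph.dist_self,
          dist_eq_two' (fun hh => h (Vert.w.inj hh).symm) (nw_w l' l)
            ((av_w ⟨0, hn0⟩ l').symm) (av_w ⟨0, hn0⟩ l)]
        omega
      · exact ⟨_, hzS, dist_ne_of_adj' (aw_w' l) (nw_w' (Ne.symm h))⟩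
    have Hww' : ∀ l l' : Fin (q + 1),
        ∃ z ∈ S, (G E).dist (Vert.w l) z ≠ (G E).dist (Vert.w' l') z := by
      intro l l'
      by_cases h : l = l'
      · subst h
        obtain ⟨z, hzS, hz⟩ := zwW l
        rcases hz with rfl | rfl
        · refine ⟨_, hzS, ?_⟩
          rw [SimpleGraph.dist_self, d1 ((aw_w' l).symm)]
          omega
        · refine ⟨_, hzS, ?_⟩
          rw [d1 (aw_w' l), SimpleGraph.dist_self]
          omega
      · obtain ⟨z, hzS, hz⟩ := zwW l
        rcases hz with rfl | rfl
        · refine ⟨_, hzS, ?_⟩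
          rw [SimpleGraph.dist_self,
            dist_eq_two' (by simp) (nadj_symm (nw_w' h)) ((av_w' ⟨0, hn0⟩ l').symm)
              (av_w ⟨0, hn0⟩ l)]
          omega
        · exact ⟨_, hzS, dist_ne_of_adj' (aw_w' l) (nw'_w' l' l)⟩
    have Hw'w' : ∀ l l' : Fin (q + 1), l ≠ l' →
        ∃ z ∈ S, (G E).dist (Vert.w' l) z ≠ (G E).dist (Vert.w' l') z := by
      intro l l' h
      obtain ⟨z, hzS, hz⟩ := zwW l
      rcases hz with rfl | rfl
      · exact ⟨_, hzS, dist_ne_of_adj' ((aw_w' l).symm) (nadj_symm (nw_w' h))⟩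
      · refine ⟨_, hzS, ?_⟩
        rw [SimpleGraph.dist_self,
          dist_eq_two' (fun hh => h (Vert.w'.inj hh).symm) (nw'_w' l' l)
            ((av_w' ⟨0, hn0⟩ l').symm) (av_w' ⟨0, hn0⟩ l)]
        omega
    intro a b hab
    rcases a with i | j | j | k | k | l | l <;>
      rcases b with i' | j' | j' | k' | k' | l' | l'
    · exact Hvv i i' (fun hh => hab (by rw [hh]))
    · exact Hve i j'
    · exact Hve' i j'
    · exact Hvu i k'
    · exact Hvu' i k'
    · exact Hvw i l'
    · exact Hvw' i l'
    · exact sym _ _ (Hve i' j)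
    · exact Hee j j' (fun hh => hab (by rw [hh]))
    · exact Hee' j j'
    · exact Heu j k'
    · exact Heu' j k'
    · exact Hew j l'
    · exact Hew' j l'
    · exact sym _ _ (Hve' i' j)
    · exact sym _ _ (Hee' j' j)
    · exact He'e' j j' (fun hh => hab (by rw [hh]))
    · exact He'u j k'
    · exact He'u' j k'
    · exact He'w j l'
    · exact He'w' j l'
    · exact sym _ _ (Hvu i' k)
    · exact sym _ _ (Heu j' k)
    · exact sym _ _ (He'u j' k)
    · exact Huu k k' (fun hh => hab (by rw [hh]))
    · exact Huu' k k'
    · exact Huw k l'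
    · exact Huw' k l'
    · exact sym _ _ (Hvu' i' k)
    · exact sym _ _ (Heu' j' k)
    · exact sym _ _ (He'u' j' k)
    · exact sym _ _ (Huu' k' k)
    · exact Hu'u' k k' (fun hh => hab (by rw [hh]))
    · exact Hu'w k l'
    · exact Hu'w' k l'
    · exact sym _ _ (Hvw i' l)
    · exact sym _ _ (Hew j' l)
    · exact sym _ _ (He'w j' l)
    · exact sym _ _ (Huw k' l)
    · exact sym _ _ (Hu'w k' l)
    · exact Hww l l' (fun hh => hab (by rw [hh]))
    · exact Hww' l l'
    · exact sym _ _ (Hvw' i' l)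
    · exact sym _ _ (Hew' j' l)
    · exact sym _ _ (He'w' j' l)
    · exact sym _ _ (Huw' k' l)
    · exact sym _ _ (Hu'w' k' l)
    · exact sym _ _ (Hww' l' l)
    · exact Hw'w' l l' (fun hh => hab (by rw [hh]))
  constructor
  · exact key
  · intro S' hS' hres
    obtain ⟨s, hsS, hsS'⟩ := Set.exists_of_ssubset hS'
    have hsub := hS'.subset
    rw [hS] at hsS
    rcases hsS with (⟨k, hkdef⟩ | ⟨k, hkdef⟩) | ⟨t, htT, htdef⟩
    · -- removed vertex is the chosen one of {u k, u' k}
      obtain ⟨z0, hz0S', hz0⟩ := hres (Vert.u k) (Vert.u' k) (by simp)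
      apply hz0
      have hz0S : z0 ∈ S := hsub hz0S'
      have hz0ne : z0 ≠ s := fun h => hsS' (h ▸ hz0S')
      rw [hS] at hz0S
      rcases hz0S with (⟨k', hk'⟩ | ⟨k', hk'⟩) | ⟨t', ht'T, ht'⟩
      · have hz' : z0 = Vert.u k' ∨ z0 = Vert.u' k' := by
          rw [← hk']; by_cases h : x k' <;> simp [h]
        have hkk : k ≠ k' := by
          rintro rfl; exact hz0ne (hk'.symm.trans hkdef)
        rw [d1 (L_u_zu hz' hkk), d1 (L_u'_zu hz' hkk)]
      · have hz' : z0 = Vert.w k' ∨ z0 = Vert.w' k' := by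
          rw [← hk']; by_cases h : y k' <;> simp [h]
        obtain ⟨j0, hj0b⟩ := hj0 k'
        rw [dist_eq_two' (ne_zw_of_u hz' k) (L_u_zw hz' k) (au_e k j0) (L_e_zw_t hz' hj0b),
          dist_eq_two' (ne_zw_of_u' hz' k) (L_u'_zw hz' k) (au'_e k j0) (L_e_zw_t hz' hj0b)]
      · subst ht'
        rcases Bool.eq_false_or_eq_true (Nat.testBit (t'.val + 1) k.val) with hb | hb
        · rw [d1 ((av_u hb).symm), d1 ((av_u' hb).symm)]
        · rw [dist_eq_two' (by simp) (nadj_symm (nv_u hb)) (au_e' k ⟨0, hm0⟩)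
              ((av_e' t' ⟨0, hm0⟩).symm),
            dist_eq_two' (by simp) (nadj_symm (nv_u' hb)) (au'_e' k ⟨0, hm0⟩)
              ((av_e' t' ⟨0, hm0⟩).symm)]
    · -- removed vertex is the chosen one of {w k, w' k}
      obtain ⟨z0, hz0S', hz0⟩ := hres (Vert.w k) (Vert.w' k) (by simp)
      apply hz0
      have hz0S : z0 ∈ S := hsub hz0S'
      have hz0ne : z0 ≠ s := fun h => hsS' (h ▸ hz0S')
      rw [hS] at hz0S
      rcases hz0S with (⟨k', hk'⟩ | ⟨k', hk'⟩) | ⟨t', ht'T, ht'⟩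
      · have hz' : z0 = Vert.u k' ∨ z0 = Vert.u' k' := by
          rw [← hk']; by_cases h : x k' <;> simp [h]
        obtain ⟨i0, hi0b⟩ := hi0 k'
        rw [dist_eq_two' (ne_zu_of_w hz' k) (L_w_zu hz' k) ((av_w i0 k).symm)
            (L_v_zu_t hz' hi0b),
          dist_eq_two' (ne_zu_of_w' hz' k) (L_w'_zu hz' k) ((av_w' i0 k).symm)
            (L_v_zu_t hz' hi0b)]
      · have hz' : z0 = Vert.w k' ∨ z0 = Vert.w' k' := by
          rw [← hk']; by_cases h : y k' <;> simp [h]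
        have hkk : k ≠ k' := by
          rintro rfl; exact hz0ne (hk'.symm.trans hkdef)
        rw [dist_eq_two' (ne_zw_of_w hz' hkk) (L_w_zw hz' hkk) ((av_w ⟨0, hn0⟩ k).symm)
            (L_v_zw hz' ⟨0, hn0⟩),
          dist_eq_two' (ne_zw_of_w' hz' hkk) (L_w'_zw hz' hkk) ((av_w' ⟨0, hn0⟩ k).symm)
            (L_v_zw hz' ⟨0, hn0⟩)]
      · subst ht'
        rw [d1 ((av_w t' k).symm), d1 ((av_w' t' k).symm)]
    · -- removed vertex is v t with t ∈ T
      have hTt : ¬ IsTransversal E (T \ {t}) :=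
        hT.2 _ (Set.sdiff_singleton_ssubset.mpr htT)
      rw [IsTransversal, not_forall] at hTt
      obtain ⟨j, hj0'⟩ := hTt
      have hj : (T \ {t}) ∩ E j = ∅ := by
        by_contra hcon
        exact hj0' (Set.nonempty_iff_ne_empty.mpr hcon)
      have htEj : t ∈ E j := by
        obtain ⟨t0, ht0T, ht0E⟩ := hT.1 j
        by_contra hne
        have ht0t : t0 ≠ t := fun h => hne (h ▸ ht0E)
        have : t0 ∈ (T \ {t}) ∩ E j := ⟨⟨ht0T, ht0t⟩, ht0E⟩
        rw [hj] at this; exact this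
      have hother : ∀ t' ∈ T, t' ≠ t → t' ∉ E j := by
        intro t' h1 h2 h3
        have : t' ∈ (T \ {t}) ∩ E j := ⟨⟨h1, h2⟩, h3⟩
        rw [hj] at this; exact this
      obtain ⟨i1, hi1⟩ := (Set.ne_univ_iff_exists_notMem _).mp (hfull j)
      obtain ⟨z0, hz0S', hz0⟩ := hres (Vert.e j) (Vert.e' j) (by simp)
      apply hz0
      have hz0S : z0 ∈ S := hsub hz0S'
      have hz0ne : z0 ≠ s := fun h => hsS' (h ▸ hz0S')
      rw [hS] at hz0S
      rcases hz0S with (⟨k', hk'⟩ | ⟨k', hk'⟩) | ⟨t', ht'T, ht'⟩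
      · have hz' : z0 = Vert.u k' ∨ z0 = Vert.u' k' := by
          rw [← hk']; by_cases h : x k' <;> simp [h]
        rw [d1 (L_e_zu hz' j), d1 (L_e'_zu hz' j)]
      · have hz' : z0 = Vert.w k' ∨ z0 = Vert.w' k' := by
          rw [← hk']; by_cases h : y k' <;> simp [h]
        rcases Bool.eq_false_or_eq_true (Nat.testBit (j.val + 1) k'.val) with hb | hb
        · rw [d1 (L_e_zw_t hz' hb), d1 (L_e'_zw_t hz' hb)]
        · rw [dist_eq_two' (ne_zw_of_e hz' j) (L_e_zw_f hz' hb) ((av_e hi1).symm)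
              (L_v_zw hz' i1),
            dist_eq_two' (ne_zw_of_e' hz' j) (L_e'_zw_f hz' hb) ((av_e' i1 j).symm)
              (L_v_zw hz' i1)]
      · subst ht'
        have htt' : t' ≠ t := by
          intro hh
          exact hz0ne (by rw [hh, htdef])
        have hnotE : t' ∉ E j := hother t' ht'T htt'
        rw [d1 ((av_e hnotE).symm), d1 ((av_e' t' j).symm)]

end ResConstr
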